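/- arXiv:2604.14033 — 2 statements merged into one kernel-verified Lean document; each statement's English description precedes it below -/
import Mathlib

section
/- Let F : Ω × ℝ → ℝ be continuous in the second variable with F(x,·) achieving intermediate values, and let Λ : Ω → [0,1] be Borel, u⁻ ≤ u⁺ Borel functions. Then there exists a Borel function λ : Ω → [0,1] such that for every x, Λ(x) F(x, u⁺(x)) + (1−Λ(x)) F(x, u⁻(x)) = F(x, (1−λ(x)) u⁻(x) + λ(x) u⁺(x)). -/
/-!
For fixed `x`, the value `Λ F(x,u⁺) + (1-Λ) F(x,u⁻)` lies between `F(x,u⁻)` and `F(x,u⁺)`, so by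
the intermediate value theorem `t ↦ F(x, (1-t) u⁻ + t u⁺) - (Λ F(x,u⁺) + (1-Λ) F(x,u⁻))` has a zero
in `[0,1]`; take `λ(x)` to be the least one. Then `λ(x) ≤ c` iff this function vanishes somewhere
on the compact set `[0, min c 1]`, and by compactness that happens iff it is arbitrarily small on a
countable dense subset, a countable combination of measurable conditions on `x`.
-/

open MeasureTheory Set TopologicalSpace

section ZeroSets

variable {X : Type*} [TopologicalSpace X]

theorem exists_mem_eq_zero_iff_forall_exists_abs_lt {K D : Set X} (hK : IsCompact K)
    (hDK : D ⊆ K) (hKD : K ⊆ closure D) {f : X → ℝ} (hf : Continuous f) :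
    (∃ t ∈ K, f t = 0) ↔ ∀ n : ℕ, ∃ d ∈ D, |f d| < 1 / (n + 1) := by
  constructor
  · rintro ⟨t, htK, hft⟩ n
    have hopen : IsOpen {s | |f s| < 1 / (n + 1)} := isOpen_lt hf.abs continuous_const
    obtain ⟨d, hd, hdD⟩ := mem_closure_iff.1 (hKD htK) _ hopen (by simp [hft]; positivity)
    exact ⟨d, hdD, hd⟩
  · intro hsmall
    obtain ⟨d, hdD, -⟩ := hsmall 0
    obtain ⟨t, htK, hmin⟩ := hK.exists_isMinOn ⟨d, hDK hdD⟩ hf.abs.continuousOn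
    refine ⟨t, htK, abs_eq_zero.1 (le_antisymm ?_ (abs_nonneg _))⟩
    refine le_of_forall_pos_lt_add fun ε hε => ?_
    obtain ⟨n, hn⟩ := exists_nat_one_div_lt hε
    obtain ⟨d, hdD, hd⟩ := hsmall n
    linarith [isMinOn_iff.1 hmin d (hDK hdD)]

variable [PseudoMetrizableSpace X] {α : Type*} [MeasurableSpace α]

theorem measurableSet_exists_mem_eq_zero {g : α → X → ℝ} (hcont : ∀ x, Continuous (g x))
    (hmeas : ∀ t, Measurable fun x => g x t) {K : Set X} (hK : IsCompact K) :
    MeasurableSet {x | ∃ t ∈ K, g x t = 0} := by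
  obtain ⟨D, hDK, hDc, hKD⟩ := hK.isSeparable.exists_countable_dense_subset
  have hset : {x | ∃ t ∈ K, g x t = 0} = ⋂ n : ℕ, ⋃ d ∈ D, {x | |g x d| < 1 / (n + 1)} := by
    ext x
    simpa using exists_mem_eq_zero_iff_forall_exists_abs_lt hK hDK hKD (hcont x)
  rw [hset]
  exact .iInter fun n => .biUnion hDc fun d _ => measurableSet_lt (hmeas d).abs measurable_const

end ZeroSets

section LeastZero

variable {a b : ℝ}

theorem csInf_zeros_mem {f : ℝ → ℝ} (hf : Continuous f) (h : ∃ t ∈ Icc a b, f t = 0) :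
    sInf {t ∈ Icc a b | f t = 0} ∈ {t ∈ Icc a b | f t = 0} :=
  (isClosed_Icc.inter (isClosed_singleton.preimage hf)).csInf_mem h ⟨a, fun _ ht => ht.1.1⟩

theorem csInf_zeros_le_iff {f : ℝ → ℝ} (hf : Continuous f) (h : ∃ t ∈ Icc a b, f t = 0) (c : ℝ) :
    sInf {t ∈ Icc a b | f t = 0} ≤ c ↔ ∃ t ∈ Icc a (min c b), f t = 0 := by
  constructor
  · intro hc
    obtain ⟨⟨hat, htb⟩, hft⟩ := csInf_zeros_mem hf h
    exact ⟨_, ⟨hat, le_min hc htb⟩, hft⟩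
  · rintro ⟨t, ⟨hat, htc⟩, hft⟩
    calc sInf {t ∈ Icc a b | f t = 0} ≤ t :=
          csInf_le ⟨a, fun _ ht => ht.1.1⟩ ⟨⟨hat, htc.trans (min_le_right c b)⟩, hft⟩
      _ ≤ c := htc.trans (min_le_left c b)

theorem measurable_csInf_zeros {α : Type*} [MeasurableSpace α] {g : α → ℝ → ℝ}
    (hcont : ∀ x, Continuous (g x)) (hmeas : ∀ t, Measurable fun x => g x t)
    (h : ∀ x, ∃ t ∈ Icc a b, g x t = 0) :
    Measurable fun x => sInf {t ∈ Icc a b | g x t = 0} := by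
  refine measurable_of_Iic fun c => ?_
  simp only [preimage, mem_Iic, csInf_zeros_le_iff (hcont _) (h _)]
  exact measurableSet_exists_mem_eq_zero hcont hmeas isCompact_Icc

end LeastZero

theorem exists_mem_Icc_eq_convex_combination {φ : ℝ → ℝ} (hφ : Continuous φ) {Λ : ℝ}
    (hΛ : Λ ∈ Icc (0:ℝ) 1) : ∃ t ∈ Icc (0:ℝ) 1, φ t = Λ * φ 1 + (1 - Λ) * φ 0 := by
  have hmem : Λ * φ 1 + (1 - Λ) * φ 0 ∈ uIcc (φ 0) (φ 1) :=
    convex_uIcc _ _ right_mem_uIcc left_mem_uIcc hΛ.1 (sub_nonneg.2 hΛ.2) (by ring)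
  simpa [uIcc_of_le zero_le_one] using intermediate_value_uIcc hφ.continuousOn hmem

theorem external_to_internal_selection_general {N : ℕ}
    (F : EuclideanSpace ℝ (Fin N) → ℝ → ℝ)
    (hFmeas : ∀ t : ℝ, Measurable fun x => F x t)
    (hFcont : ∀ x, Continuous (F x))
    (Lam um up : EuclideanSpace ℝ (Fin N) → ℝ)
    (hLam : Measurable Lam) (hLam01 : ∀ x, Lam x ∈ Icc (0:ℝ) 1)
    (hum : Measurable um) (hup : Measurable up) :
    ∃ lam : EuclideanSpace ℝ (Fin N) → ℝ, Measurable lam ∧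
      ∀ x, lam x ∈ Icc (0:ℝ) 1 ∧
        Lam x * F x (up x) + (1 - Lam x) * F x (um x)
          = F x ((1 - lam x) * um x + lam x * up x) := by
  have hFjoint : Measurable fun p : EuclideanSpace ℝ (Fin N) × ℝ => F p.1 p.2 :=
    (measurable_uncurry_of_continuous_of_measurable (u := fun t x => F x t) hFcont hFmeas).comp
      measurable_swap
  have hFcomp {v : EuclideanSpace ℝ (Fin N) → ℝ} (hv : Measurable v) :
      Measurable fun x => F x (v x) := hFjoint.comp (measurable_id.prodMk hv)
  set T := fun x => Lam x * F x (up x) + (1 - Lam x) * F x (um x)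
  set g := fun x t => F x ((1 - t) * um x + t * up x) - T x
  have hgcont (x) : Continuous (g x) := by fun_prop
  have hgmeas (t : ℝ) : Measurable fun x => g x t :=
    (hFcomp ((hum.const_mul _).add (hup.const_mul _))).sub
      ((hLam.mul (hFcomp hup)).add ((measurable_const.sub hLam).mul (hFcomp hum)))
  have hzero (x) : ∃ t ∈ Icc (0:ℝ) 1, g x t = 0 := by
    obtain ⟨t, ht, heq⟩ := exists_mem_Icc_eq_convex_combination
      (φ := fun t => F x ((1 - t) * um x + t * up x)) (by fun_prop) (hLam01 x)
    exact ⟨t, ht, sub_eq_zero.2 (by simpa [T] using heq)⟩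
  refine ⟨_, measurable_csInf_zeros hgcont hgmeas hzero, fun x => ?_⟩
  obtain ⟨hmem, hg⟩ := csInf_zeros_mem (hgcont x) (hzero x)
  exact ⟨hmem, (sub_eq_zero.1 hg).symm⟩

theorem external_to_internal_selection {N : ℕ}
    (F : EuclideanSpace ℝ (Fin N) → ℝ → ℝ)
    (hFmeas : ∀ t : ℝ, Measurable fun x => F x t)
    (hFcont : ∀ x, Continuous (F x))
    (Lam um up : EuclideanSpace ℝ (Fin N) → ℝ)
    (hLam : Measurable Lam) (hLam01 : ∀ x, Lam x ∈ Icc (0:ℝ) 1)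
    (hum : Measurable um) (hup : Measurable up) (hle : ∀ x, um x ≤ up x) :
    ∃ lam : EuclideanSpace ℝ (Fin N) → ℝ, Measurable lam ∧
      ∀ x, lam x ∈ Icc (0:ℝ) 1 ∧
        Lam x * F x (up x) + (1 - Lam x) * F x (um x)
          = F x ((1 - lam x) * um x + lam x * up x) :=
  external_to_internal_selection_general F hFmeas hFcont Lam um up hLam hLam01 hum hup
end

section
/- Let F : Ω × ℝ → ℝ be 1-Lipschitz in the second variable, u⁻ ≤ u^λ ≤ u⁺ real numbers (for fixed x ∈ Ω), and define Λ := (F(x,u^λ) − F(x,u⁻)) / (F(x,u⁺) − F(x,u⁻)) when F(x,u⁺) ≠ F(x,u⁻), Λ := 0 otherwise, and Λ̃ := max(0, min(1, Λ)). Set R := F(x, u^λ) − ((1−Λ̃) F(x,u⁻) + Λ̃ F(x,u⁺)). Then |R| ≤ u⁺ − u⁻, and R = 0 whenever F(x,u^λ) lies between F(x,u⁻) and F(x,u⁺). -/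
/-!
`R = F ul - p` where `p` is the point of parameter `Lamt ∈ [0, 1]` on the segment from `F um` to
`F up`, so `|R|` is at most `max |F ul - F um| |F ul - F up|`, and both are `≤ up - um` by the
Lipschitz bound. If `F ul` lies on that segment then `Lam` is its own parameter there, already in
`[0, 1]`, so the clipping does nothing and `p = F ul`.
-/

open Set

section LinearOrderedField

variable {K : Type*} [Field K] [LinearOrder K]

theorem abs_sub_lerp_le [IsStrictOrderedRing K] {a b c M t : K} (ht : t ∈ Icc 0 1)
    (ha : |c - a| ≤ M) (hb : |c - b| ≤ M) : |c - ((1 - t) * a + t * b)| ≤ M := by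
  have h1t : 0 ≤ 1 - t := sub_nonneg.2 ht.2
  calc |c - ((1 - t) * a + t * b)| = |(1 - t) * (c - a) + t * (c - b)| := by ring_nf
    _ ≤ (1 - t) * |c - a| + t * |c - b| := by
      grw [abs_add_le, abs_mul, abs_mul, abs_of_nonneg h1t, abs_of_nonneg ht.1]
    _ ≤ (1 - t) * M + t * M := by gcongr; exact ht.1
    _ = M := by ring

theorem div_sub_sub_mem_Icc_of_mem_uIcc [IsStrictOrderedRing K] {a b c : K} (h : c ∈ uIcc a b) :
    (c - a) / (b - a) ∈ Icc 0 1 := by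
  rcases eq_or_ne a b with rfl | hab
  · simp
  rcases mem_uIcc.1 h with ⟨hac, hcb⟩ | ⟨hbc, hca⟩
  · have hba : 0 < b - a := sub_pos.2 (lt_of_le_of_ne (hac.trans hcb) hab)
    exact ⟨div_nonneg (sub_nonneg.2 hac) hba.le, (div_le_one hba).2 (by linarith)⟩
  · have hab' : 0 < a - b := sub_pos.2 (lt_of_le_of_ne (hbc.trans hca) hab.symm)
    rw [← neg_div_neg_eq, neg_sub, neg_sub]
    exact ⟨div_nonneg (sub_nonneg.2 hca) hab'.le, (div_le_one hab').2 (by linarith)⟩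

theorem sub_lerp_div_sub_sub_eq_zero {a b c : K} (h : c ∈ uIcc a b) :
    c - ((1 - (c - a) / (b - a)) * a + (c - a) / (b - a) * b) = 0 := by
  rcases eq_or_ne a b with rfl | hab
  · simp_all
  · have : b - a ≠ 0 := sub_ne_zero.2 hab.symm
    field_simp
    ring

end LinearOrderedField

theorem abs_apply_sub_apply_le_of_mem_Icc {F : ℝ → ℝ}
    (hLip : ∀ s t : ℝ, |F t - F s| ≤ |t - s|) {a b x y : ℝ} (hx : x ∈ Icc a b)
    (hy : y ∈ Icc a b) : |F x - F y| ≤ b - a :=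
  (hLip y x).trans (Real.dist_eq x y ▸ Real.dist_le_of_mem_Icc hx hy)

theorem remainder_estimate (F : ℝ → ℝ) (hLip : ∀ s t : ℝ, |F t - F s| ≤ |t - s|)
    (um ul up : ℝ) (h1 : um ≤ ul) (h2 : ul ≤ up)
    (Lam Lamt R : ℝ)
    (hLam : Lam = if F up ≠ F um then (F ul - F um) / (F up - F um) else 0)
    (hLamt : Lamt = max 0 (min 1 Lam))
    (hR : R = F ul - ((1 - Lamt) * F um + Lamt * F up)) :
    |R| ≤ up - um ∧ (F ul ∈ Set.uIcc (F um) (F up) → R = 0) := by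
  -- The case split in `hLam` is redundant: division by `0` already gives `0`.
  have hLam' : Lam = (F ul - F um) / (F up - F um) := by
    rw [hLam]; split_ifs <;> simp_all
  have hLamt' : Lamt = projIcc 0 1 zero_le_one Lam := hLamt
  subst hR
  refine ⟨abs_sub_lerp_le (hLamt' ▸ (projIcc 0 1 zero_le_one Lam).2) ?_ ?_, fun h => ?_⟩
  · exact abs_apply_sub_apply_le_of_mem_Icc hLip ⟨h1, h2⟩ ⟨le_rfl, h1.trans h2⟩
  · exact abs_apply_sub_apply_le_of_mem_Icc hLip ⟨h1, h2⟩ ⟨h1.trans h2, le_rfl⟩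
  · have hmem : Lam ∈ Icc 0 1 := hLam' ▸ div_sub_sub_mem_Icc_of_mem_uIcc h
    have hLamt_eq : Lamt = Lam := by rw [hLamt', projIcc_of_mem zero_le_one hmem]
    rw [hLamt_eq, hLam']
    exact sub_lerp_div_sub_sub_eq_zero h
end
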